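/- Let G be an additive subgroup of ℂ which is a free abelian group of rank ν ≥ 1. Then every transposed Poisson structure on the deformed generalized Heisenberg–Virasoro algebra g(G,−2) is trivial: any commutative associative bilinear multiplication · on g(G,−2) satisfying 2 z·[x,y] = [z·x, y] + [x, z·y] for all x, y, z is identically zero. -/

import Mathlib

open scoped Classical

/-- Index set for the basis of the deformed generalized Heisenberg–Virasoro
algebra `g(G, -2)`, where `G` is free abelian of rank `ν` with a fixed
`ℤ`-basis `ε_1, …, ε_ν` (indexed here by `Fin ν`).  The central elements
`C_LI^(i)` for `2 ≤ i ≤ ν` are indexed by the elements of `Fin ν` of positive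
value. -/
inductive DGHV2Idx (G : AddSubgroup ℂ) (ν : ℕ) : Type
  | L : G → DGHV2Idx G ν
  | I : G → DGHV2Idx G ν
  | CL : DGHV2Idx G ν
  | CLI : {i : Fin ν // 0 < i.val} → DGHV2Idx G ν

/-!
Every left multiplication `D = mul z` of a transposed Poisson structure is a ½-derivation,
`2 D ⁅x, y⁆ = ⁅D x, y⁆ + ⁅x, D y⁆`, and a ½-derivation maps the centre into itself. So
for central `c` every product `c · x = x · c` is central, the compatibility identity for `z = c`
gives `c · ⁅x, y⁆ = 0`, and since `g(G, -2)` is perfect, `c · _ = 0`. Hence every `mul z` is a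
½-derivation vanishing on the centre, and it remains to show that such a `D` is zero. In the
basis `L_a, I_a, C_L, C_LI^(i)` the identity for the pairs `(L_a, L_b)` and `(L_a, I_b)` becomes
a family of functional equations for the coefficients of `D` over `G`. Specialising `a` and `b`
to `0` and to small multiples of a nonzero element of `G` forces every coefficient to vanish,
except that the `L`-coefficients of the `D L_a` might form a multiple of the identity; that
multiple is killed by the central charge `(a³ - a) / 12` of `⁅L_a, L_{-a}⁆`. This is where
`D C_L = 0` matters: the identity map is a ½-derivation too.
-/

section HalfDerivation

variable {K L : Type*} [CommRing K] [LieRing L] [LieAlgebra K L]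

def IsHalfDerivation (D : L →ₗ[K] L) : Prop :=
  ∀ x y : L, (2 : K) • D ⁅x, y⁆ = ⁅D x, y⁆ + ⁅x, D y⁆

theorem IsHalfDerivation.two_smul_apply_lie {D : L →ₗ[K] L} (hD : IsHalfDerivation D)
    (x y : L) :
    (2 : K) • D ⁅x, y⁆ = ⁅x, D y⁆ - ⁅y, D x⁆ := by
  rw [hD, ← lie_skew (D x)]
  abel

theorem IsHalfDerivation.apply_mem_center {D : L →ₗ[K] L} (hD : IsHalfDerivation D) {c : L}
    (hc : c ∈ LieAlgebra.center K L) : D c ∈ LieAlgebra.center K L := by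
  rw [LieModule.mem_maxTrivSubmodule] at hc ⊢
  intro y
  have hc' : ∀ z : L, ⁅c, z⁆ = 0 := fun z => by rw [← lie_skew, hc, neg_zero]
  have h := hD.two_smul_apply_lie c y
  rwa [hc', hc', map_zero, smul_zero, zero_sub, zero_eq_neg] at h

theorem mul_lie_eq_zero_of_mem_center [Invertible (2 : K)] (mul : L →ₗ[K] L →ₗ[K] L)
    (hcomm : ∀ x y, mul x y = mul y x) (hD : ∀ z, IsHalfDerivation (mul z)) {c : L}
    (hc : c ∈ LieAlgebra.center K L) (x y : L) : mul c ⁅x, y⁆ = 0 := by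
  have hcentral (w z : L) : ⁅z, mul c w⁆ = 0 :=
    (LieModule.mem_maxTrivSubmodule ..).mp (hcomm w c ▸ (hD w).apply_mem_center hc) z
  have h := (hD c).two_smul_apply_lie x y
  rw [hcentral y x, hcentral x y, sub_zero] at h
  simpa [smul_smul] using congrArg ((⅟2 : K) • ·) h

end HalfDerivation

theorem Module.Basis.repr_lie_apply_eq_mul {K L ι : Type*} [CommRing K] [LieRing L]
    [LieAlgebra K L]
    (bas : Module.Basis ι K L) {w : L} {j k : ι} {r : K}
    (h : ∀ i, bas.repr ⁅w, bas i⁆ j = if i = k then r else 0) (v : L) :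
    bas.repr ⁅w, v⁆ j = r * bas.repr v k := by
  have key : bas.coord j ∘ₗ LieAlgebra.ad K L w = r • bas.coord k :=
    bas.ext fun i => by simp [h, Finsupp.single_apply, eq_comm]
  simpa using LinearMap.congr_fun key v

section AddSubgroupOfField

variable {K : Type*} [Field K] [CharZero K] {G : AddSubgroup K} [Nontrivial G]

theorem exists_ne_zero_add_mul_ne_zero (e : K) {s : K} (hs : s ≠ 0) :
    ∃ a : G, a ≠ 0 ∧ e + s * a ≠ 0 := by
  obtain ⟨g, hg⟩ := exists_ne (0 : G)
  have hg' : (g : K) ≠ 0 := by simpa using hg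
  by_cases he : e + s * g = 0
  · refine ⟨g + g, fun h => hg' ?_, fun h => mul_ne_zero hs hg' ?_⟩
    · simpa [← two_mul] using congrArg Subtype.val h
    · push_cast at h
      linear_combination h - he
  · exact ⟨g, hg, he⟩

theorem eq_zero_of_forall_mul_apply_add_eq_zero {s : K} (hs : s ≠ 0) {F : G → K}
    (hF : ∀ a b : G, (((a + b : G) : K) + s * a) * F (a + b) = 0) (e : G) : F e = 0 := by
  obtain ⟨a, -, ha⟩ := exists_ne_zero_add_mul_ne_zero (G := G) e hs
  have := hF a (e - a)
  rw [add_sub_cancel] at this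
  exact (mul_eq_zero.mp this).resolve_left ha

theorem eq_zero_of_forall_two_mul_apply_add_eq_mul_apply_sub (k : K) {F : G → G → K}
    (hF : ∀ a b c : G, 2 * (((b : K) + 2 * a) * F (a + b) c) = ((c : K) + k * a) * F b (c - a))
    (b c : G) : F b c = 0 := by
  have off_diag (b c : G) (hc : c ≠ b + b) : F b c = 0 := by
    have := hF 0 b c
    simp only [zero_add, sub_zero, ZeroMemClass.coe_zero, mul_zero, add_zero] at this
    refine (mul_eq_zero.mp (?_ : ((2 : K) * b - c) * _ = 0)).resolve_left fun hh => hc ?_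
    · linear_combination this
    · exact Subtype.ext (by push_cast; linear_combination -hh)
  obtain rfl | hc := eq_or_ne c (b + b)
  · obtain ⟨a, ha, hab⟩ := exists_ne_zero_add_mul_ne_zero (G := G) b one_ne_zero
    rw [one_mul] at hab
    have := hF a (b - a) (b + b)
    rw [add_sub_cancel, off_diag (b - a) _ fun hh => ha ?_, mul_zero] at this
    · push_cast at this
      refine (mul_eq_zero.mp (?_ : ((b : K) + a) * _ = 0)).resolve_left hab
      linear_combination this / 2
    · have := congrArg Subtype.val hh
      push_cast at this
      exact Subtype.ext (by push_cast; linear_combination this)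
  · exact off_diag b c hc

end AddSubgroupOfField

section DGHV

open DGHV2Idx

variable {ν : ℕ} {G : AddSubgroup ℂ} {V : Type*} [LieRing V] [LieAlgebra ℂ V]

structure IsDGHVBasis (ε : Module.Basis (Fin ν) ℤ G)
    (bas : Module.Basis (DGHV2Idx G ν) ℂ V) : Prop where
  lie_L_L : ∀ a b : G, ⁅bas (L a), bas (L b)⁆ =
    ((b : ℂ) - a) • bas (L (a + b)) +
      (if a + b = 0 then ((a : ℂ) ^ 3 - a) / 12 else 0) • bas CL
  lie_L_I : ∀ a b : G, ⁅bas (L a), bas (I b)⁆ =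
    ((b : ℂ) + 2 * a) • bas (I (a + b)) +
      if a + b = 0 then
        ∑ i : {i : Fin ν // 0 < i.val}, ((ε.repr a i.1 : ℤ) : ℂ) • bas (CLI i)
      else 0
  lie_I_I : ∀ a b : G, ⁅bas (I a), bas (I b)⁆ = 0
  lie_CL : ∀ x : V, ⁅bas CL, x⁆ = 0
  lie_CLI : ∀ (i : {i : Fin ν // 0 < i.val}) (x : V), ⁅bas (CLI i), x⁆ = 0

namespace IsDGHVBasis

variable {ε : Module.Basis (Fin ν) ℤ G} {bas : Module.Basis (DGHV2Idx G ν) ℂ V}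

theorem lie_CL_right (h : IsDGHVBasis ε bas) (x : V) : ⁅x, bas CL⁆ = 0 := by
  rw [← lie_skew, h.lie_CL, neg_zero]

theorem lie_CLI_right (h : IsDGHVBasis ε bas) (i) (x : V) : ⁅x, bas (CLI i)⁆ = 0 := by
  rw [← lie_skew, h.lie_CLI, neg_zero]

theorem lie_I_L (h : IsDGHVBasis ε bas) (a b : G) : ⁅bas (I b), bas (L a)⁆ =
    -(((b : ℂ) + 2 * a) • bas (I (b + a)) +
      if b + a = 0 then
        ∑ i : {i : Fin ν // 0 < i.val}, ((ε.repr a i.1 : ℤ) : ℂ) • bas (CLI i)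
      else 0) := by
  rw [← lie_skew, h.lie_L_I, add_comm a b]

theorem repr_lie_L_L (h : IsDGHVBasis ε bas) (b c : G) (v : V) :
    bas.repr ⁅bas (L b), v⁆ (L c) = ((c : ℂ) - 2 * b) * bas.repr v (L (c - b)) := by
  obtain ⟨c, rfl⟩ : ∃ d, c = b + d := ⟨c - b, (add_sub_cancel b c).symm⟩
  refine bas.repr_lie_apply_eq_mul (fun i => ?_) v
  rcases i with e | e | _ | i
  · obtain rfl | he := eq_or_ne e c
    · have hcoeff : (b + e - 2 * b : ℂ) = e - b := by ring
      simp [h.lie_L_L, apply_ite bas.repr, DFunLike.ite_apply, hcoeff]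
    · simp [h.lie_L_L, apply_ite bas.repr, DFunLike.ite_apply, he]
  · simp [h.lie_L_I, apply_ite bas.repr, DFunLike.ite_apply]
  · simp [h.lie_CL_right]
  · simp [h.lie_CLI_right]

theorem repr_lie_L_I (h : IsDGHVBasis ε bas) (b c : G) (v : V) :
    bas.repr ⁅bas (L b), v⁆ (I c) = ((c : ℂ) + b) * bas.repr v (I (c - b)) := by
  obtain ⟨c, rfl⟩ : ∃ d, c = b + d := ⟨c - b, (add_sub_cancel b c).symm⟩
  refine bas.repr_lie_apply_eq_mul (fun i => ?_) v
  rcases i with e | e | _ | i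
  · simp [h.lie_L_L, apply_ite bas.repr, DFunLike.ite_apply]
  · obtain rfl | he := eq_or_ne e c
    · have hcoeff : (b + e + b : ℂ) = e + 2 * b := by ring
      simp [h.lie_L_I, apply_ite bas.repr, DFunLike.ite_apply, Finsupp.finsetSum_apply, hcoeff]
    · simp [h.lie_L_I, apply_ite bas.repr, DFunLike.ite_apply, Finsupp.finsetSum_apply, he]
  · simp [h.lie_CL_right]
  · simp [h.lie_CLI_right]

theorem repr_lie_I_I (h : IsDGHVBasis ε bas) (b c : G) (v : V) :
    bas.repr ⁅bas (I b), v⁆ (I c) = ((b : ℂ) - 2 * c) * bas.repr v (L (c - b)) := by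
  obtain ⟨c, rfl⟩ : ∃ d, c = b + d := ⟨c - b, (add_sub_cancel b c).symm⟩
  refine bas.repr_lie_apply_eq_mul (fun i => ?_) v
  rcases i with e | e | _ | i
  · obtain rfl | he := eq_or_ne e c
    · have hcoeff : (b - 2 * (b + e) : ℂ) = -(2 * e) + -b := by ring
      simp [h.lie_I_L, apply_ite bas.repr, DFunLike.ite_apply, Finsupp.finsetSum_apply, hcoeff]
    · simp [h.lie_I_L, apply_ite bas.repr, DFunLike.ite_apply, Finsupp.finsetSum_apply, he]
  · simp [h.lie_I_I]
  · simp [h.lie_CL_right]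
  · simp [h.lie_CLI_right]

theorem repr_lie_I_L (h : IsDGHVBasis ε bas) (b c : G) (v : V) :
    bas.repr ⁅bas (I b), v⁆ (L c) = 0 := by
  refine (bas.repr_lie_apply_eq_mul (k := L c) (r := 0) (fun i => ?_) v).trans (zero_mul _)
  rcases i with e | e | _ | i
  · simp [h.lie_I_L, apply_ite bas.repr, DFunLike.ite_apply, Finsupp.finsetSum_apply]
  · simp [h.lie_I_I]
  · simp [h.lie_CL_right]
  · simp [h.lie_CLI_right]

theorem repr_lie_L_CL (h : IsDGHVBasis ε bas) (b : G) (v : V) :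
    bas.repr ⁅bas (L b), v⁆ CL = (((b : ℂ) ^ 3 - b) / 12) * bas.repr v (L (-b)) := by
  refine bas.repr_lie_apply_eq_mul (fun i => ?_) v
  rcases i with e | e | _ | i
  · obtain rfl | he := eq_or_ne e (-b)
    · simp [h.lie_L_L]
    · simp [h.lie_L_L, add_eq_zero_iff_eq_neg', he]
  · simp [h.lie_L_I, apply_ite bas.repr, DFunLike.ite_apply, Finsupp.finsetSum_apply]
  · simp [h.lie_CL_right]
  · simp [h.lie_CLI_right]

theorem repr_lie_I_CL (h : IsDGHVBasis ε bas) (b : G) (v : V) :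
    bas.repr ⁅bas (I b), v⁆ CL = 0 := by
  refine (bas.repr_lie_apply_eq_mul (k := CL) (r := 0) (fun i => ?_) v).trans (zero_mul _)
  rcases i with e | e | _ | i
  · simp [h.lie_I_L, apply_ite bas.repr, DFunLike.ite_apply, Finsupp.finsetSum_apply]
  · simp [h.lie_I_I]
  · simp [h.lie_CL_right]
  · simp [h.lie_CLI_right]

theorem repr_lie_L_CLI (h : IsDGHVBasis ε bas) (b : G) (i : {i : Fin ν // 0 < i.val}) (v : V) :
    bas.repr ⁅bas (L b), v⁆ (CLI i) = (ε.repr b i : ℂ) * bas.repr v (I (-b)) := by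
  refine bas.repr_lie_apply_eq_mul (fun k => ?_) v
  rcases k with e | e | _ | k
  · simp [h.lie_L_L, apply_ite bas.repr, DFunLike.ite_apply]
  · obtain rfl | he := eq_or_ne e (-b)
    · simp [h.lie_L_I, Finsupp.single_apply]
    · simp [h.lie_L_I, add_eq_zero_iff_eq_neg', he]
  · simp [h.lie_CL_right]
  · simp [h.lie_CLI_right]

theorem repr_lie_I_CLI (h : IsDGHVBasis ε bas) (b : G) (i : {i : Fin ν // 0 < i.val}) (v : V) :
    bas.repr ⁅bas (I b), v⁆ (CLI i) = (ε.repr b i : ℂ) * bas.repr v (L (-b)) := by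
  refine bas.repr_lie_apply_eq_mul (fun k => ?_) v
  rcases k with e | e | _ | k
  · obtain rfl | he := eq_or_ne e (-b)
    · simp [h.lie_I_L, Finsupp.single_apply]
    · simp [h.lie_I_L, add_eq_zero_iff_eq_neg', he]
  · simp [h.lie_I_I]
  · simp [h.lie_CL_right]
  · simp [h.lie_CLI_right]

theorem basis_CL_mem_center (h : IsDGHVBasis ε bas) : bas CL ∈ LieAlgebra.center ℂ V :=
  h.lie_CL_right

theorem basis_CLI_mem_center (h : IsDGHVBasis ε bas) (i : {i : Fin ν // 0 < i.val}) :
    bas (CLI i) ∈ LieAlgebra.center ℂ V :=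
  h.lie_CLI_right i

section Perfect

variable {M : Type*} [AddCommGroup M] [Module ℂ M]

theorem map_basis_L_zero_eq_zero_of_map_lie_eq_zero (h : IsDGHVBasis ε bas) [Nontrivial G]
    {f : V →ₗ[ℂ] M} (hf : ∀ x y : V, f ⁅x, y⁆ = 0) :
    f (bas (L 0)) = 0 ∧ f (bas CL) = 0 := by
  obtain ⟨g, hg⟩ := exists_ne (0 : G)
  have hg' : (g : ℂ) ≠ 0 := by simpa using hg
  have hpair (a : G) :
      (2 * a : ℂ) • f (bas (L 0)) - (((a : ℂ) ^ 3 - a) / 12) • f (bas CL) = 0 := by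
    have := hf (bas (L (-a))) (bas (L a))
    rw [h.lie_L_L, neg_add_cancel, if_pos rfl, map_add, map_smul, map_smul] at this
    push_cast at this
    linear_combination (norm := module) this
  have hCL : f (bas CL) = 0 := by
    have hcomb : ((g : ℂ) ^ 3 / 2) • f (bas CL) = 0 := by
      linear_combination (norm := module) 2 • hpair g - hpair (g + g)
    exact (smul_eq_zero.mp hcomb).resolve_left (by simpa using hg')
  refine ⟨?_, hCL⟩
  have := hpair g
  rw [hCL, smul_zero, sub_zero] at this
  exact (smul_eq_zero.mp this).resolve_left (by simpa using hg')

theorem map_basis_I_zero_eq_zero_of_map_lie_eq_zero (h : IsDGHVBasis ε bas) [NeZero ν]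
    {f : V →ₗ[ℂ] M} (hf : ∀ x y : V, f ⁅x, y⁆ = 0) :
    f (bas (I 0)) = 0 ∧ ∀ i, f (bas (CLI i)) = 0 := by
  have hpair (a : G) : (a : ℂ) • f (bas (I 0)) +
      ∑ i : {i : Fin ν // 0 < i.val}, ((ε.repr a i.1 : ℤ) : ℂ) • f (bas (CLI i)) = 0 := by
    have := hf (bas (L a)) (bas (I (-a)))
    rw [h.lie_L_I, add_neg_cancel, if_pos rfl, map_add, map_smul, map_sum] at this
    simp only [map_smul] at this
    push_cast at this
    convert this using 3
    ring
  -- `ε 0` has no components along the `ε i` with `0 < i`, which carry the central elements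
  have hI0 : f (bas (I 0)) = 0 := by
    have := hpair (ε 0)
    simp only [ε.repr_self, Finsupp.single_apply, Fin.ext_iff, Fin.val_zero] at this
    simpa [fun i : {i : Fin ν // 0 < i.val} => i.2.ne, ε.ne_zero 0] using this
  refine ⟨hI0, fun i => ?_⟩
  simpa [hI0, ε.repr_self, Finsupp.single_apply, Subtype.val_inj] using hpair (ε i)

theorem eq_zero_of_map_lie_eq_zero (h : IsDGHVBasis ε bas) [NeZero ν] {f : V →ₗ[ℂ] M}
    (hf : ∀ x y : V, f ⁅x, y⁆ = 0) : f = 0 := by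
  have : Nontrivial G := ⟨⟨ε 0, 0, ε.ne_zero 0⟩⟩
  obtain ⟨hL0, hCL⟩ := h.map_basis_L_zero_eq_zero_of_map_lie_eq_zero hf
  obtain ⟨hI0, hCLI⟩ := h.map_basis_I_zero_eq_zero_of_map_lie_eq_zero hf
  have hL (a : G) : f (bas (L a)) = 0 := by
    obtain rfl | ha := eq_or_ne a 0
    · exact hL0
    have := hf (bas (L 0)) (bas (L a))
    rw [h.lie_L_L, zero_add, if_neg ha, zero_smul, add_zero, map_smul] at this
    exact (smul_eq_zero.mp this).resolve_left (by simpa using ha)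
  have hI (a : G) : f (bas (I a)) = 0 := by
    obtain rfl | ha := eq_or_ne a 0
    · exact hI0
    have := hf (bas (L 0)) (bas (I a))
    rw [h.lie_L_I, zero_add, if_neg ha, add_zero, map_smul] at this
    exact (smul_eq_zero.mp this).resolve_left (by simpa using ha)
  refine bas.ext fun j => ?_
  rcases j with a | a | _ | i
  exacts [hL a, hI a, hCL, hCLI i]

end Perfect

section HalfDerivation

variable {D : V →ₗ[ℂ] V}

theorem two_mul_repr_apply_L (h : IsDGHVBasis ε bas) (hD : IsHalfDerivation D)
    (hCL : D (bas CL) = 0) (a b : G) (j : DGHV2Idx G ν) :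
    2 * (((b : ℂ) - a) * bas.repr (D (bas (L (a + b)))) j) =
      bas.repr ⁅bas (L a), D (bas (L b))⁆ j - bas.repr ⁅bas (L b), D (bas (L a))⁆ j := by
  have := congrArg (bas.repr · j) (hD.two_smul_apply_lie (bas (L a)) (bas (L b)))
  simpa [h.lie_L_L, hCL, apply_ite D, mul_assoc] using this

theorem two_mul_repr_apply_I (h : IsDGHVBasis ε bas) (hD : IsHalfDerivation D)
    (hCLI : ∀ i, D (bas (CLI i)) = 0) (a b : G) (j : DGHV2Idx G ν) :
    2 * (((b : ℂ) + 2 * a) * bas.repr (D (bas (I (a + b)))) j) =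
      bas.repr ⁅bas (L a), D (bas (I b))⁆ j - bas.repr ⁅bas (I b), D (bas (L a))⁆ j := by
  have := congrArg (bas.repr · j) (hD.two_smul_apply_lie (bas (L a)) (bas (I b)))
  simpa [h.lie_L_I, hCLI, apply_ite D, mul_assoc] using this

theorem repr_apply_I_L_eq_zero [Nontrivial G] (h : IsDGHVBasis ε bas)
    (hD : IsHalfDerivation D) (hCLI : ∀ i, D (bas (CLI i)) = 0) (b c : G) :
    bas.repr (D (bas (I b))) (L c) = 0 := by
  refine eq_zero_of_forall_two_mul_apply_add_eq_mul_apply_sub (-2)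
    (F := fun b c => bas.repr (D (bas (I b))) (L c)) (fun a b c => ?_) b c
  have := h.two_mul_repr_apply_I hD hCLI a b (L c)
  rw [h.repr_lie_L_L, h.repr_lie_I_L, sub_zero] at this
  linear_combination this

theorem repr_apply_L_L_eq_of_ne (h : IsDGHVBasis ε bas) (hD : IsHalfDerivation D)
    (hCL : D (bas CL) = 0) {b c : G} (hc : c ≠ b + b) :
    bas.repr (D (bas (L b))) (L c) = bas.repr (D (bas (L 0))) (L (c - b)) := by
  have := h.two_mul_repr_apply_L hD hCL 0 b (L c)
  simp only [h.repr_lie_L_L, zero_add, sub_zero, ZeroMemClass.coe_zero, mul_zero] at this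
  refine sub_eq_zero.mp ((mul_eq_zero.mp (?_ : ((2 : ℂ) * b - c) * _ = 0)).resolve_left
    fun hh => hc (Subtype.ext (by push_cast; linear_combination -hh)))
  linear_combination this

theorem repr_apply_L_zero_L_eq_zero (h : IsDGHVBasis ε bas) (hD : IsHalfDerivation D)
    (hCL : D (bas CL) = 0) (hCLI : ∀ i, D (bas (CLI i)) = 0) {d : G} (hd : d ≠ 0) :
    bas.repr (D (bas (L 0))) (L d) = 0 := by
  have hQ (b c : G) : ((2 : ℂ) * b - c) * bas.repr (D (bas (I b))) (I c) =
      (2 * c - b) * bas.repr (D (bas (L 0))) (L (c - b)) := by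
    have := h.two_mul_repr_apply_I hD hCLI 0 b (I c)
    simp only [h.repr_lie_L_I, h.repr_lie_I_I, zero_add, sub_zero, ZeroMemClass.coe_zero,
      mul_zero, add_zero] at this
    linear_combination this
  -- the coefficients of `D (I (d + d))`, `D (I 0)` and `D (L (d + d))` cancel below
  have h1 := hQ (d + d) (d + d + d)
  have h2 := hQ 0 d
  have h3 := h.two_mul_repr_apply_L hD hCL 0 (d + d) (L (d + d + d))
  have h4 := h.two_mul_repr_apply_I hD hCLI (d + d) 0 (I (d + d + d))
  simp only [h.repr_lie_L_L, h.repr_lie_L_I, h.repr_lie_I_I, add_sub_cancel_left, zero_add,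
    add_zero, sub_zero] at h1 h2 h3 h4
  push_cast at h1 h2 h3 h4
  have hd' : (d : ℂ) ≠ 0 := by simpa using hd
  refine (mul_eq_zero.mp (?_ : (36 : ℂ) * d ^ 2 * _ = 0)).resolve_left (by simp [hd'])
  linear_combination (d : ℂ) * h4 - 8 * (d : ℂ) * h1 - 5 * (d : ℂ) * h2 + 6 * (d : ℂ) * h3

theorem repr_apply_L_L_eq_zero_of_ne (h : IsDGHVBasis ε bas) (hD : IsHalfDerivation D)
    (hCL : D (bas CL) = 0) (hCLI : ∀ i, D (bas (CLI i)) = 0) {b c : G} (hcb : c ≠ b) :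
    bas.repr (D (bas (L b))) (L c) = 0 := by
  have hc_sub : c - b ≠ 0 := sub_ne_zero.mpr hcb
  obtain rfl | hc := eq_or_ne c (b + b)
  · rw [add_sub_cancel_right] at hc_sub
    have hb : (b : ℂ) ≠ 0 := by simpa using hc_sub
    have := h.two_mul_repr_apply_L hD hCL (-b) (b + b) (L (b + b))
    rw [h.repr_lie_L_L, h.repr_lie_L_L, neg_add_cancel_left, sub_self, sub_neg_eq_add,
      h.repr_apply_L_L_eq_of_ne hD hCL (b := -b) (c := 0) fun hh => hb ?_,
      h.repr_apply_L_L_eq_of_ne hD hCL (b := b + b) (c := b + b + b) fun hh => hb ?_,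
      add_sub_cancel_left, zero_sub, neg_neg, h.repr_apply_L_zero_L_eq_zero hD hCL hCLI hc_sub]
      at this
    · push_cast at this
      refine (mul_eq_zero.mp (?_ : (6 : ℂ) * b * _ = 0)).resolve_left (by simp [hb])
      linear_combination this
    · have := congrArg Subtype.val hh; push_cast at this; linear_combination -this
    · have := congrArg Subtype.val hh; push_cast at this; linear_combination this / 2
  · rw [h.repr_apply_L_L_eq_of_ne hD hCL hc, h.repr_apply_L_zero_L_eq_zero hD hCL hCLI hc_sub]

theorem repr_apply_L_L_eq_zero [Nontrivial G] (h : IsDGHVBasis ε bas)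
    (hD : IsHalfDerivation D) (hCL : D (bas CL) = 0) (hCLI : ∀ i, D (bas (CLI i)) = 0)
    (b c : G) : bas.repr (D (bas (L b))) (L c) = 0 := by
  obtain hcb | rfl := ne_or_eq c b
  · exact h.repr_apply_L_L_eq_zero_of_ne hD hCL hCLI hcb
  have hdiag (b : G) (hb : b ≠ 0) :
      bas.repr (D (bas (L b))) (L b) = bas.repr (D (bas (L 0))) (L 0) := by
    rw [h.repr_apply_L_L_eq_of_ne hD hCL fun hh => hb (by simpa using hh), sub_self]
  -- the central term of `⁅L a, L (-a)⁆` pins down the common diagonal value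
  have hcentral (a : G) (ha : a ≠ 0) :
      2 * ((-2 * (a : ℂ)) * bas.repr (D (bas (L 0))) CL) =
        ((a : ℂ) ^ 3 - a) / 6 * bas.repr (D (bas (L 0))) (L 0) := by
    have := h.two_mul_repr_apply_L hD hCL a (-a) CL
    rw [h.repr_lie_L_CL, h.repr_lie_L_CL, neg_neg, add_neg_cancel, hdiag a ha,
      hdiag (-a) (neg_ne_zero.mpr ha)] at this
    push_cast at this
    linear_combination this
  have hzero : bas.repr (D (bas (L 0))) (L 0) = 0 := by
    obtain ⟨g, hg⟩ := exists_ne (0 : G)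
    have hg' : (g : ℂ) ≠ 0 := by simpa using hg
    have h1 := hcentral g hg
    have h2 := hcentral (g + g) fun hh => hg' (by simpa [← two_mul] using congrArg Subtype.val hh)
    push_cast at h2
    refine (mul_eq_zero.mp (?_ : (g : ℂ) ^ 3 * _ = 0)).resolve_left (pow_ne_zero 3 hg')
    linear_combination 2 * h1 - h2
  obtain rfl | hc := eq_or_ne c 0
  · exact hzero
  · rw [hdiag c hc, hzero]

theorem repr_apply_I_I_eq_zero [Nontrivial G] (h : IsDGHVBasis ε bas)
    (hD : IsHalfDerivation D) (hCL : D (bas CL) = 0) (hCLI : ∀ i, D (bas (CLI i)) = 0)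
    (b c : G) : bas.repr (D (bas (I b))) (I c) = 0 := by
  refine eq_zero_of_forall_two_mul_apply_add_eq_mul_apply_sub 1
    (F := fun b c => bas.repr (D (bas (I b))) (I c)) (fun a b c => ?_) b c
  have := h.two_mul_repr_apply_I hD hCLI a b (I c)
  rw [h.repr_lie_L_I, h.repr_lie_I_I, h.repr_apply_L_L_eq_zero hD hCL hCLI] at this
  linear_combination this

theorem two_mul_repr_apply_L_I (h : IsDGHVBasis ε bas) (hD : IsHalfDerivation D)
    (hCL : D (bas CL) = 0) (a b c : G) :
    2 * (((b : ℂ) - a) * bas.repr (D (bas (L (a + b)))) (I c)) =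
      ((c : ℂ) + a) * bas.repr (D (bas (L b))) (I (c - a)) -
        ((c : ℂ) + b) * bas.repr (D (bas (L a))) (I (c - b)) := by
  rw [h.two_mul_repr_apply_L hD hCL, h.repr_lie_L_I, h.repr_lie_L_I]

theorem mul_repr_apply_L_I_eq (h : IsDGHVBasis ε bas) (hD : IsHalfDerivation D)
    (hCL : D (bas CL) = 0) (b c : G) :
    ((2 : ℂ) * b - c) * bas.repr (D (bas (L b))) (I c) =
      -((c : ℂ) + b) * bas.repr (D (bas (L 0))) (I (c - b)) := by
  have := h.two_mul_repr_apply_L_I hD hCL 0 b c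
  simp only [zero_add, sub_zero, ZeroMemClass.coe_zero, add_zero] at this
  linear_combination this

theorem repr_apply_L_zero_I_eq_zero [Nontrivial G] (h : IsDGHVBasis ε bas)
    (hD : IsHalfDerivation D) (hCL : D (bas CL) = 0) (d : G) :
    bas.repr (D (bas (L 0))) (I d) = 0 := by
  obtain ⟨g, hg⟩ := exists_ne (0 : G)
  have hg' : (g : ℂ) ≠ 0 := by simpa using hg
  -- the coefficients of `D (L (-(g + g) + -g))`, `D (L (-(g + g)))` and `D (L (-g))` cancel below
  obtain ⟨c, hc⟩ : ∃ c : G, c = d + -(g + g) + -g := ⟨_, rfl⟩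
  have h1 := h.mul_repr_apply_L_I_eq hD hCL (-(g + g) + -g) c
  have h2 := h.mul_repr_apply_L_I_eq hD hCL (-(g + g)) (c - -g)
  have h3 := h.mul_repr_apply_L_I_eq hD hCL (-g) (c - -(g + g))
  have h4 := h.two_mul_repr_apply_L_I hD hCL (-(g + g)) (-g) c
  rw [show c - (-(g + g) + -g) = d by rw [hc]; abel] at h1
  rw [show c - -g - -(g + g) = d by rw [hc]; abel] at h2
  rw [show c - -(g + g) - -g = d by rw [hc]; abel] at h3
  push_cast [hc] at h1 h2 h3 h4
  refine (mul_eq_zero.mp (?_ : (36 : ℂ) * g ^ 4 * _ = 0)).resolve_left (by simp [hg'])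
  linear_combination (-2 * (g : ℂ) * (-2 * g - d) * (-g - d)) * h1
    + (-((d : ℂ) - 4 * g) * (-3 * g - d) * (-g - d)) * h2
    + (((d : ℂ) - 5 * g) * (-3 * g - d) * (-2 * g - d)) * h3
    + ((-3 * (g : ℂ) - d) * (-2 * g - d) * (-g - d)) * h4

theorem repr_apply_L_I_eq_zero [Nontrivial G] (h : IsDGHVBasis ε bas)
    (hD : IsHalfDerivation D) (hCL : D (bas CL) = 0) (b c : G) :
    bas.repr (D (bas (L b))) (I c) = 0 := by
  have off_diag (b c : G) (hc : c ≠ b + b) : bas.repr (D (bas (L b))) (I c) = 0 := by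
    have := h.mul_repr_apply_L_I_eq hD hCL b c
    rw [h.repr_apply_L_zero_I_eq_zero hD hCL, mul_zero] at this
    exact (mul_eq_zero.mp this).resolve_left
      fun hh => hc (Subtype.ext (by push_cast; linear_combination -hh))
  obtain rfl | hc := eq_or_ne c (b + b)
  · obtain rfl | hb := eq_or_ne b 0
    · rw [add_zero]
      exact h.repr_apply_L_zero_I_eq_zero hD hCL 0
    have hb' : (b : ℂ) ≠ 0 := by simpa using hb
    have := h.two_mul_repr_apply_L_I hD hCL (-b) (b + b) (b + b)
    rw [neg_add_cancel_left, sub_neg_eq_add, sub_self,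
      off_diag (b + b) (b + b + b) fun hh => hb' ?_,
      off_diag (-b) 0 fun hh => hb' ?_] at this
    · push_cast at this
      refine (mul_eq_zero.mp (?_ : (b : ℂ) * _ = 0)).resolve_left hb'
      linear_combination this / 6
    · have := congrArg Subtype.val hh; push_cast at this; linear_combination this / 2
    · have := congrArg Subtype.val hh; push_cast at this; linear_combination -this
  · exact off_diag b c hc

theorem repr_apply_L_CL_eq_zero [Nontrivial G] (h : IsDGHVBasis ε bas)
    (hD : IsHalfDerivation D) (hCL : D (bas CL) = 0) (hCLI : ∀ i, D (bas (CLI i)) = 0) (b : G) :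
    bas.repr (D (bas (L b))) CL = 0 := by
  refine eq_zero_of_forall_mul_apply_add_eq_zero (s := -2) (by norm_num)
    (F := fun e => bas.repr (D (bas (L e))) CL) (fun a b => ?_) b
  have := h.two_mul_repr_apply_L hD hCL a b CL
  rw [h.repr_lie_L_CL, h.repr_lie_L_CL, h.repr_apply_L_L_eq_zero hD hCL hCLI,
    h.repr_apply_L_L_eq_zero hD hCL hCLI] at this
  push_cast
  linear_combination this / 2

theorem repr_apply_L_CLI_eq_zero [Nontrivial G] (h : IsDGHVBasis ε bas)
    (hD : IsHalfDerivation D) (hCL : D (bas CL) = 0) (b : G) (i : {i : Fin ν // 0 < i.val}) :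
    bas.repr (D (bas (L b))) (CLI i) = 0 := by
  refine eq_zero_of_forall_mul_apply_add_eq_zero (s := -2) (by norm_num)
    (F := fun e => bas.repr (D (bas (L e))) (CLI i)) (fun a b => ?_) b
  have := h.two_mul_repr_apply_L hD hCL a b (CLI i)
  rw [h.repr_lie_L_CLI, h.repr_lie_L_CLI, h.repr_apply_L_I_eq_zero hD hCL,
    h.repr_apply_L_I_eq_zero hD hCL] at this
  push_cast
  linear_combination this / 2

theorem repr_apply_I_CL_eq_zero [Nontrivial G] (h : IsDGHVBasis ε bas)
    (hD : IsHalfDerivation D) (hCLI : ∀ i, D (bas (CLI i)) = 0) (b : G) :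
    bas.repr (D (bas (I b))) CL = 0 := by
  refine eq_zero_of_forall_mul_apply_add_eq_zero (s := 1) one_ne_zero
    (F := fun e => bas.repr (D (bas (I e))) CL) (fun a b => ?_) b
  have := h.two_mul_repr_apply_I hD hCLI a b CL
  rw [h.repr_lie_L_CL, h.repr_lie_I_CL, h.repr_apply_I_L_eq_zero hD hCLI] at this
  push_cast
  linear_combination this / 2

theorem repr_apply_I_CLI_eq_zero [Nontrivial G] (h : IsDGHVBasis ε bas)
    (hD : IsHalfDerivation D) (hCL : D (bas CL) = 0) (hCLI : ∀ i, D (bas (CLI i)) = 0) (b : G)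
    (i : {i : Fin ν // 0 < i.val}) : bas.repr (D (bas (I b))) (CLI i) = 0 := by
  refine eq_zero_of_forall_mul_apply_add_eq_zero (s := 1) one_ne_zero
    (F := fun e => bas.repr (D (bas (I e))) (CLI i)) (fun a b => ?_) b
  have := h.two_mul_repr_apply_I hD hCLI a b (CLI i)
  rw [h.repr_lie_L_CLI, h.repr_lie_I_CLI, h.repr_apply_I_I_eq_zero hD hCL hCLI,
    h.repr_apply_L_L_eq_zero hD hCL hCLI] at this
  push_cast
  linear_combination this / 2

theorem eq_zero_of_isHalfDerivation [Nontrivial G] (h : IsDGHVBasis ε bas)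
    (hD : IsHalfDerivation D) (hCL : D (bas CL) = 0) (hCLI : ∀ i, D (bas (CLI i)) = 0) :
    D = 0 := by
  refine bas.ext fun j => ?_
  rcases j with a | a | _ | i
  · refine bas.ext_elem fun j => ?_
    rcases j with c | c | _ | i
    · simp [h.repr_apply_L_L_eq_zero hD hCL hCLI]
    · simp [h.repr_apply_L_I_eq_zero hD hCL]
    · simp [h.repr_apply_L_CL_eq_zero hD hCL hCLI]
    · simp [h.repr_apply_L_CLI_eq_zero hD hCL]
  · refine bas.ext_elem fun j => ?_
    rcases j with c | c | _ | i
    · simp [h.repr_apply_I_L_eq_zero hD hCLI]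
    · simp [h.repr_apply_I_I_eq_zero hD hCL hCLI]
    · simp [h.repr_apply_I_CL_eq_zero hD hCLI]
    · simp [h.repr_apply_I_CLI_eq_zero hD hCL hCLI]
  · simpa using hCL
  · simpa using hCLI i

end HalfDerivation

end IsDGHVBasis

end DGHV

theorem transposedPoisson_dgHV_neg_two_trivial_general
    (ν : ℕ) (hν : 1 ≤ ν)
    (G : AddSubgroup ℂ) (ε : Module.Basis (Fin ν) ℤ G)
    (Lg : Type*) [LieRing Lg] [LieAlgebra ℂ Lg]
    (bas : Module.Basis (DGHV2Idx G ν) ℂ Lg)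
    (hLL : ∀ a b : G, ⁅bas (DGHV2Idx.L a), bas (DGHV2Idx.L b)⁆ =
      ((b : ℂ) - (a : ℂ)) • bas (DGHV2Idx.L (a + b)) +
        (if a + b = 0 then ((a : ℂ) ^ 3 - (a : ℂ)) / 12 else 0) •
          bas DGHV2Idx.CL)
    (hLI : ∀ a b : G, ⁅bas (DGHV2Idx.L a), bas (DGHV2Idx.I b)⁆ =
      ((b : ℂ) + 2 * (a : ℂ)) • bas (DGHV2Idx.I (a + b)) +
        (if a + b = 0 then
          ∑ i : {i : Fin ν // 0 < i.val},
            ((ε.repr a i.1 : ℤ) : ℂ) • bas (DGHV2Idx.CLI i)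
        else 0))
    (hII : ∀ a b : G, ⁅bas (DGHV2Idx.I a), bas (DGHV2Idx.I b)⁆ = 0)
    (hCL : ∀ x : Lg, ⁅bas DGHV2Idx.CL, x⁆ = 0)
    (hCLI : ∀ (i : {i : Fin ν // 0 < i.val}) (x : Lg),
      ⁅bas (DGHV2Idx.CLI i), x⁆ = 0)
    (mul : Lg →ₗ[ℂ] Lg →ₗ[ℂ] Lg)
    (hcomm : ∀ x y : Lg, mul x y = mul y x)
    (hcompat : ∀ x y z : Lg,
      (2 : ℂ) • mul z ⁅x, y⁆ = ⁅mul z x, y⁆ + ⁅x, mul z y⁆) :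
    mul = 0 := by
  have h : IsDGHVBasis ε bas := ⟨hLL, hLI, hII, hCL, hCLI⟩
  have : NeZero ν := ⟨by omega⟩
  have : Nontrivial G := ⟨⟨ε 0, 0, ε.ne_zero 0⟩⟩
  have hD (z : Lg) : IsHalfDerivation (mul z) := fun x y => hcompat x y z
  have hcenter {c : Lg} (hc : c ∈ LieAlgebra.center ℂ Lg) (z : Lg) : mul z c = 0 := by
    rw [hcomm, h.eq_zero_of_map_lie_eq_zero (mul_lie_eq_zero_of_mem_center mul hcomm hD hc)]
    rfl
  ext1 z
  exact h.eq_zero_of_isHalfDerivation (hD z) (hcenter h.basis_CL_mem_center z)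
    fun i => hcenter (h.basis_CLI_mem_center i) z

/-- every transposed Poisson structure on `g(G, -2)` (with `G`
free abelian of rank `ν ≥ 1`) is trivial. -/
theorem transposedPoisson_dgHV_neg_two_trivial
    (ν : ℕ) (hν : 1 ≤ ν)
    (G : AddSubgroup ℂ) (ε : Module.Basis (Fin ν) ℤ G)
    (Lg : Type*) [LieRing Lg] [LieAlgebra ℂ Lg]
    (bas : Module.Basis (DGHV2Idx G ν) ℂ Lg)
    (hLL : ∀ a b : G, ⁅bas (DGHV2Idx.L a), bas (DGHV2Idx.L b)⁆ =
      ((b : ℂ) - (a : ℂ)) • bas (DGHV2Idx.L (a + b)) +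
        (if a + b = 0 then ((a : ℂ) ^ 3 - (a : ℂ)) / 12 else 0) •
          bas DGHV2Idx.CL)
    (hLI : ∀ a b : G, ⁅bas (DGHV2Idx.L a), bas (DGHV2Idx.I b)⁆ =
      ((b : ℂ) + 2 * (a : ℂ)) • bas (DGHV2Idx.I (a + b)) +
        (if a + b = 0 then
          ∑ i : {i : Fin ν // 0 < i.val},
            ((ε.repr a i.1 : ℤ) : ℂ) • bas (DGHV2Idx.CLI i)
        else 0))
    (hII : ∀ a b : G, ⁅bas (DGHV2Idx.I a), bas (DGHV2Idx.I b)⁆ = 0)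
    (hCL : ∀ x : Lg, ⁅bas DGHV2Idx.CL, x⁆ = 0)
    (hCLI : ∀ (i : {i : Fin ν // 0 < i.val}) (x : Lg),
      ⁅bas (DGHV2Idx.CLI i), x⁆ = 0)
    (mul : Lg →ₗ[ℂ] Lg →ₗ[ℂ] Lg)
    (hcomm : ∀ x y : Lg, mul x y = mul y x)
    (hassoc : ∀ x y z : Lg, mul (mul x y) z = mul x (mul y z))
    (hcompat : ∀ x y z : Lg,
      (2 : ℂ) • mul z ⁅x, y⁆ = ⁅mul z x, y⁆ + ⁅x, mul z y⁆) :
    mul = 0 :=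
  transposedPoisson_dgHV_neg_two_trivial_general ν hν G ε Lg bas hLL hLI hII hCL hCLI mul hcomm
    hcompat
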